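/- arXiv:2009.01146 — 5 statements merged into one kernel-verified Lean document; each statement's English description precedes it below -/
import Mathlib

section
/- Let h : ℝ → ℝ be a smooth 2π-periodic function and f : ℝ² → ℝ a smooth 2π-biperiodic function. Then ∂f/∂y(x,y) + f(x,y)·h(x) = 0 for all (x,y) ∈ ℝ² if and only if both ∂f/∂y(x,y) = 0 for all (x,y) and f(x,y)·h(x) = 0 for all (x,y). -/
open Real

/-- A function `u : ℝ² → ℝ` (curried) is smooth if it is `C^∞` as a function on `ℝ × ℝ`. -/
def Smooth2 (u : ℝ → ℝ → ℝ) : Prop :=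
  ContDiff ℝ (⊤ : ℕ∞) fun p : ℝ × ℝ => u p.1 p.2

/-- A function `u : ℝ² → ℝ` is 2π-biperiodic if `u(x+2π, y) = u(x,y) = u(x, y+2π)`. -/
def Biperiodic (u : ℝ → ℝ → ℝ) : Prop :=
  ∀ x y : ℝ, u (x + 2 * π) y = u x y ∧ u x (y + 2 * π) = u x y

/-- A function `v : ℝ → ℝ` is 2π-periodic if `v(x+2π) = v(x)` for all `x`. -/
def Periodic2pi (v : ℝ → ℝ) : Prop := ∀ x : ℝ, v (x + 2 * π) = v x

/-- Partial derivative in the first variable. -/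
noncomputable def pderivX (u : ℝ → ℝ → ℝ) : ℝ → ℝ → ℝ :=
  fun x y => deriv (fun t => u t y) x

/-- Partial derivative in the second variable. -/
noncomputable def pderivY (u : ℝ → ℝ → ℝ) : ℝ → ℝ → ℝ :=
  fun x y => deriv (fun t => u x t) y

/-! Fix `x` and put `c = h x`. The equation says `g = f x` solves `g' = -c g`, so `g(y) e^{cy}` is
constant. Evaluating at `0` and `2π` gives `g(0) (e^{2πc} - 1) = 0`, so `g = 0` unless `c = 0`;
either way `f·h = 0`, and then `∂f/∂y = 0` by the equation itself. -/

theorem Smooth2.differentiable_right {f : ℝ → ℝ → ℝ} (hf : Smooth2 f) (x : ℝ) :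
    Differentiable ℝ (f x) := fun y =>
  (hf.differentiable (by simp) (x, y)).comp y
    ((differentiableAt_const x).prodMk differentiableAt_id)

theorem mul_exp_eq_of_deriv_add_mul_eq_zero {g : ℝ → ℝ} {c : ℝ} (hg : Differentiable ℝ g)
    (hode : ∀ y, deriv g y + g y * c = 0) (y : ℝ) : g y * exp (c * y) = g 0 := by
  have hderiv : ∀ t, HasDerivAt (fun t => g t * exp (c * t)) 0 t := fun t => by
    have hexp : HasDerivAt (fun t => exp (c * t)) (exp (c * t) * c) t := by
      simpa using ((hasDerivAt_id t).const_mul c).exp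
    have hzero : deriv g t * exp (c * t) + g t * (exp (c * t) * c) = 0 := by
      linear_combination exp (c * t) * hode t
    exact hzero ▸ (hg t).hasDerivAt.mul hexp
  simpa using is_const_of_deriv_eq_zero (fun t => (hderiv t).differentiableAt)
    (fun t => (hderiv t).deriv) y 0

theorem Function.Periodic.eq_zero_of_deriv_add_mul_eq_zero {g : ℝ → ℝ} {c T : ℝ}
    (hgT : Function.Periodic g T) (hT : T ≠ 0) (hc : c ≠ 0) (hg : Differentiable ℝ g)
    (hode : ∀ y, deriv g y + g y * c = 0) : g = 0 := by
  have hsol := mul_exp_eq_of_deriv_add_mul_eq_zero hg hode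
  have hexp : exp (c * T) ≠ 1 := by
    rw [Ne, exp_eq_one_iff]
    exact mul_ne_zero hc hT
  have hg0 : g 0 = 0 := by
    have h := hsol T
    rw [show g T = g 0 by simpa using hgT 0] at h
    exact (mul_eq_zero.mp (by linear_combination h : g 0 * (exp (c * T) - 1) = 0)).resolve_right
      (sub_ne_zero.mpr hexp)
  funext y
  simpa [hg0, exp_ne_zero] using hsol y

theorem eq_zero_iff_both_zero_general (h : ℝ → ℝ)
    (f : ℝ → ℝ → ℝ) (hf : Smooth2 f) (hfp : Biperiodic f) :
    (∀ x y, pderivY f x y + f x y * h x = 0) ↔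
    ((∀ x y, pderivY f x y = 0) ∧ (∀ x y, f x y * h x = 0)) := by
  constructor
  · intro H
    have hfh : ∀ x y, f x y * h x = 0 := fun x y => by
      rcases eq_or_ne (h x) 0 with hc | hc
      · rw [hc, mul_zero]
      · have hgT : Function.Periodic (f x) (2 * π) := fun y => (hfp x y).2
        rw [hgT.eq_zero_of_deriv_add_mul_eq_zero (by positivity) hc (hf.differentiable_right x)
          (H x), Pi.zero_apply, zero_mul]
    exact ⟨fun x y => by simpa [hfh x y] using H x y, hfh⟩
  · rintro ⟨hf', hfh⟩ x y
    rw [hf' x y, hfh x y, add_zero]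

/-- For smooth 2π-periodic `h : ℝ → ℝ` and smooth 2π-biperiodic `f : ℝ² → ℝ`, the equation
`∂f/∂y + f·h = 0` holds everywhere iff both `∂f/∂y = 0` and `f·h = 0` hold everywhere. -/
theorem eq_zero_iff_both_zero (h : ℝ → ℝ) (hh : ContDiff ℝ (⊤ : ℕ∞) h) (hhp : Periodic2pi h)
    (f : ℝ → ℝ → ℝ) (hf : Smooth2 f) (hfp : Biperiodic f) :
    (∀ x y, pderivY f x y + f x y * h x = 0) ↔
    ((∀ x y, pderivY f x y = 0) ∧ (∀ x y, f x y * h x = 0)) :=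
  eq_zero_iff_both_zero_general h f hf hfp
end

section
/- Let e : ℝ² → ℝ be a smooth 2π-biperiodic function, and let h : ℝ² → ℝ be a smooth 2π-biperiodic function such that ∂h/∂y(x,y) = e(x,y) whenever ∫₀^{2π} e(x,t) dt = 0. Then a smooth 2π-biperiodic function f : ℝ² → ℝ satisfies ∂f/∂y(x,y) + f(x,y)·e(x,y) = 0 for all (x,y) ∈ ℝ² if and only if: for every x ∈ ℝ the function y ↦ e^{h(x,y)}·f(x,y) is constant, and this constant is 0 whenever ∫₀^{2π} e(x,t) dt ≠ 0. -/
open Real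

/-!
Multiplying `∂f/∂y + f e = 0` by the integrating factor `exp b`, where `∂b/∂y = e`, turns it
into `∂(exp b · f)/∂y = 0`. When `e(x, ·)` has mean zero, `h(x, ·)` is such a `b`. Otherwise
take `b(y) = ∫₀^y e(x, t) dt`: then `exp b · f` is constant in `y`, and comparing `y = 0`
with `y = 2π` gives `f(x, 0) = exp (∫₀^{2π} e(x, t) dt) · f(x, 0)`, so `f(x, ·)` vanishes.
-/

theorem Smooth2.differentiable_slice {u : ℝ → ℝ → ℝ} (hu : Smooth2 u) (x : ℝ) :
    Differentiable ℝ (u x) :=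
  (hu.comp (contDiff_const.prodMk contDiff_id)).differentiable (by simp)

theorem HasDerivAt.exp_mul {u b : ℝ → ℝ} {u' a y : ℝ} (hu : HasDerivAt u u' y)
    (hb : HasDerivAt b a y) :
    HasDerivAt (fun t => Real.exp (b t) * u t) (Real.exp (b y) * (u' + u y * a)) y :=
  (hb.exp.mul hu).congr_deriv (by ring)

theorem linear_ode_iff_exp_mul_const {u b a : ℝ → ℝ} (hu : Differentiable ℝ u)
    (hb : ∀ y, HasDerivAt b (a y) y) :
    (∀ y, deriv u y + u y * a y = 0) ↔ ∀ y₁ y₂, exp (b y₁) * u y₁ = exp (b y₂) * u y₂ := by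
  have hderiv (y : ℝ) := (hu y).hasDerivAt.exp_mul (hb y)
  constructor
  · intro hode
    exact is_const_of_deriv_eq_zero (fun y => (hderiv y).differentiableAt)
      fun y => by rw [(hderiv y).deriv, hode, mul_zero]
  · intro hconst y
    have hflat : (fun t => exp (b t) * u t) = fun _ => exp (b 0) * u 0 :=
      funext fun t => hconst t 0
    have hzero := (hderiv y).deriv
    rw [hflat, deriv_const, eq_comm, mul_eq_zero] at hzero
    exact hzero.resolve_left (exp_ne_zero _)

theorem periodic_linear_ode_iff_eq_zero {u a : ℝ → ℝ} {T : ℝ} (hu : Differentiable ℝ u)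
    (hper : Function.Periodic u T) (ha : Continuous a) (hmean : ∫ t in (0 : ℝ)..T, a t ≠ 0) :
    (∀ y, deriv u y + u y * a y = 0) ↔ ∀ y, u y = 0 := by
  refine ⟨fun hode => ?_, fun hzero y => ?_⟩
  · set b : ℝ → ℝ := fun y => ∫ t in (0 : ℝ)..y, a t
    have hconst := (linear_ode_iff_exp_mul_const (b := b) hu
      fun y => (ha.integral_hasStrictDerivAt 0 y).hasDerivAt).mp hode
    have hb0 : b 0 = 0 := intervalIntegral.integral_same
    have hu0 : u 0 = 0 := by
      have hcycle := hconst T 0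
      rw [hb0, exp_zero, one_mul, ← zero_add T, hper 0, zero_add] at hcycle
      have hexp : exp (b T) ≠ 1 := fun h1 => hmean (exp_eq_one_iff _ |>.mp h1)
      have : (exp (b T) - 1) * u 0 = 0 := by linear_combination hcycle
      exact (mul_eq_zero.mp this).resolve_left (sub_ne_zero.mpr hexp)
    intro y
    have := hconst y 0
    rw [hu0, mul_zero, mul_eq_zero] at this
    exact this.resolve_left (exp_ne_zero _)
  · rw [show u = fun _ => 0 from funext hzero, deriv_const, zero_mul, add_zero]

theorem solution_iff_exp_constant_general (e : ℝ → ℝ → ℝ) (he : Smooth2 e)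
    (h : ℝ → ℝ → ℝ) (hh : Smooth2 h)
    (hprim : ∀ x : ℝ, (∫ t in (0:ℝ)..(2 * π), e x t) = 0 → ∀ y : ℝ, pderivY h x y = e x y)
    (f : ℝ → ℝ → ℝ) (hf : Smooth2 f) (hfp : Biperiodic f) :
    (∀ x y, pderivY f x y + f x y * e x y = 0) ↔
    (∀ x : ℝ,
      (∀ y₁ y₂ : ℝ, Real.exp (h x y₁) * f x y₁ = Real.exp (h x y₂) * f x y₂) ∧
      ((∫ t in (0:ℝ)..(2 * π), e x t) ≠ 0 → ∀ y : ℝ, Real.exp (h x y) * f x y = 0)) := by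
  refine forall_congr' fun x => ?_
  change (∀ y, deriv (f x) y + f x y * e x y = 0) ↔ _
  by_cases hmean : ∫ t in (0:ℝ)..(2 * π), e x t = 0
  · have hprimx (y : ℝ) : HasDerivAt (h x) (e x y) y :=
      hprim x hmean y ▸ (hh.differentiable_slice x y).hasDerivAt
    rw [linear_ode_iff_exp_mul_const (hf.differentiable_slice x) hprimx]
    exact iff_self_and.mpr fun _ hne => absurd hmean hne
  · have hper : Function.Periodic (f x) (2 * π) := fun y => (hfp x y).2
    rw [periodic_linear_ode_iff_eq_zero (hf.differentiable_slice x) hper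
      (he.differentiable_slice x).continuous hmean]
    simp only [mul_eq_zero, exp_ne_zero, false_or, ne_eq, hmean, not_false_eq_true,
      forall_const]
    exact ⟨fun hzero => ⟨fun y₁ y₂ => by rw [hzero, hzero, mul_zero, mul_zero], hzero⟩, And.right⟩

/-- Let `e` be smooth 2π-biperiodic and `h` smooth 2π-biperiodic with `∂h/∂y(x,y) = e(x,y)`
whenever `∫₀^{2π} e(x,t) dt = 0`. Then a smooth 2π-biperiodic `f` satisfies
`∂f/∂y + f·e = 0` everywhere iff for every `x` the function `y ↦ e^{h(x,y)} f(x,y)` is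
constant, and this constant is `0` whenever `∫₀^{2π} e(x,t) dt ≠ 0`. -/
theorem solution_iff_exp_constant (e : ℝ → ℝ → ℝ) (he : Smooth2 e) (hep : Biperiodic e)
    (h : ℝ → ℝ → ℝ) (hh : Smooth2 h) (hhp : Biperiodic h)
    (hprim : ∀ x : ℝ, (∫ t in (0:ℝ)..(2 * π), e x t) = 0 → ∀ y : ℝ, pderivY h x y = e x y)
    (f : ℝ → ℝ → ℝ) (hf : Smooth2 f) (hfp : Biperiodic f) :
    (∀ x y, pderivY f x y + f x y * e x y = 0) ↔
    (∀ x : ℝ,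
      (∀ y₁ y₂ : ℝ, Real.exp (h x y₁) * f x y₁ = Real.exp (h x y₂) * f x y₂) ∧
      ((∫ t in (0:ℝ)..(2 * π), e x t) ≠ 0 → ∀ y : ℝ, Real.exp (h x y) * f x y = 0)) :=
  solution_iff_exp_constant_general e he h hh hprim f hf hfp
end

section
/- Let c : ℝ² → ℝ be a smooth 2π-biperiodic function such that ∫₀^{2π} c(x,y) dy ≠ 0 for every x ∈ ℝ. Then there exists ε > 0 such that for every smooth 2π-biperiodic function a : ℝ² → ℝ with |∂a/∂x(x,y)| < ε for all (x,y), the only smooth 2π-biperiodic function f : ℝ² → ℝ satisfying ∂f/∂y(x,y) + f(x,y)·(c(x,y) − ∂a/∂x(x,y)) = 0 for all (x,y) ∈ ℝ² is the zero function. -/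
open Real

/-! Fix `x` and put `v = f(x, ·)`, `b = c(x, ·) - ∂a/∂x(x, ·)`. Then `v' + v b = 0`, so
`v(t) · exp (∫₀ᵗ b)` is constant, and `v(2π) = v(0)` forces `v(0) = 0` — hence `v ≡ 0` — as soon as
`∫₀^{2π} b ≠ 0`. Since `x ↦ ∫₀^{2π} c(x, y) dy` is continuous, periodic and nonvanishing, it is
bounded away from zero by some `m > 0`, and `|∂a/∂x| < m / (4π)` keeps `|∫₀^{2π} b| ≥ m / 2`. -/

theorem Function.Periodic.exists_pos_le_norm {E : Type*} [NormedAddCommGroup E] {g : ℝ → E}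
    {T : ℝ} (hg : Function.Periodic g T) (hT : T ≠ 0) (hcont : Continuous g)
    (hne : ∀ x, g x ≠ 0) : ∃ m > 0, ∀ x, m ≤ ‖g x‖ := by
  have hcompact : IsCompact (Set.range fun x => ‖g x‖) :=
    (hg.comp norm).compact_of_continuous hT hcont.norm
  obtain ⟨_, ⟨x₀, rfl⟩, hleast⟩ := hcompact.exists_isLeast (Set.range_nonempty _)
  exact ⟨‖g x₀‖, norm_pos_iff.mpr (hne x₀), fun x => hleast ⟨x, rfl⟩⟩

section LinearODE

variable {v v' b : ℝ → ℝ}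

theorem mul_exp_integral_eq_of_hasDerivAt_add_mul (hb : Continuous b)
    (hv : ∀ t, HasDerivAt v (v' t) t) (hode : ∀ t, v' t + v t * b t = 0) (t : ℝ) :
    v t * exp (∫ s in (0:ℝ)..t, b s) = v 0 := by
  have hderiv : ∀ t, HasDerivAt (fun t => v t * exp (∫ s in (0:ℝ)..t, b s)) 0 t := by
    intro t
    refine ((hv t).mul (hb.integral_hasStrictDerivAt 0 t).hasDerivAt.exp).congr_deriv ?_
    linear_combination exp (∫ s in (0:ℝ)..t, b s) * hode t
  simpa using is_const_of_deriv_eq_zero (fun t => (hderiv t).differentiableAt)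
    (fun t => (hderiv t).deriv) t 0

theorem eq_zero_of_hasDerivAt_add_mul_of_integral_ne_zero {T : ℝ} (hb : Continuous b)
    (hv : ∀ t, HasDerivAt v (v' t) t) (hode : ∀ t, v' t + v t * b t = 0) (hper : v T = v 0)
    (hT : ∫ s in (0:ℝ)..T, b s ≠ 0) (t : ℝ) : v t = 0 := by
  have hv0 : v 0 = 0 := by
    have hmonodromy := mul_exp_integral_eq_of_hasDerivAt_add_mul hb hv hode T
    rw [hper] at hmonodromy
    by_contra h
    exact hT (exp_eq_one_iff _ |>.mp ((mul_eq_left₀ h).mp hmonodromy))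
  have ht := mul_exp_integral_eq_of_hasDerivAt_add_mul hb hv hode t
  rw [hv0] at ht
  exact (mul_eq_zero.mp ht).resolve_right (exp_ne_zero _)

end LinearODE

theorem hasDerivAt_pderivY {f : ℝ → ℝ → ℝ}
    (hf : Differentiable ℝ fun p : ℝ × ℝ => f p.1 p.2) (x y : ℝ) :
    HasDerivAt (f x) (pderivY f x y) y :=
  ((hf (x, y)).comp y ((differentiableAt_const x).prodMk differentiableAt_id)).hasDerivAt

theorem continuous_pderivX {a : ℝ → ℝ → ℝ} (ha : ContDiff ℝ 1 fun p : ℝ × ℝ => a p.1 p.2) :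
    Continuous fun p : ℝ × ℝ => pderivX a p.1 p.2 := by
  have hpartial : ∀ x y, pderivX a x y = fderiv ℝ (fun q : ℝ × ℝ => a q.1 q.2) (x, y) (1, 0) := by
    intro x y
    have hline : HasDerivAt (fun t : ℝ => (t, y)) ((1 : ℝ), (0 : ℝ)) x :=
      (hasDerivAt_id' x).prodMk (hasDerivAt_const x y)
    exact ((ha.differentiable one_ne_zero (x, y)).hasFDerivAt.comp_hasDerivAt x hline).deriv
  simp_rw [hpartial]
  exact (ha.continuous_fderiv one_ne_zero).clm_apply continuous_const

/-- If `c` is smooth 2π-biperiodic and `∫₀^{2π} c(x,y) dy ≠ 0` for every `x`, then there is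
`ε > 0` such that for every smooth 2π-biperiodic `a` with `|∂a/∂x| < ε` everywhere, the only
smooth 2π-biperiodic solution `f` of `∂f/∂y + f·(c − ∂a/∂x) = 0` is the zero function. -/
theorem small_perturbation_only_zero_solution (c : ℝ → ℝ → ℝ)
    (hc : Smooth2 c) (hcp : Biperiodic c)
    (hint : ∀ x : ℝ, (∫ y in (0:ℝ)..(2 * π), c x y) ≠ 0) :
    ∃ ε > (0:ℝ), ∀ a : ℝ → ℝ → ℝ, Smooth2 a → Biperiodic a →
      (∀ x y, |pderivX a x y| < ε) →
      ∀ f : ℝ → ℝ → ℝ, Smooth2 f → Biperiodic f →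
        (∀ x y, pderivY f x y + f x y * (c x y - pderivX a x y) = 0) →
        ∀ x y, f x y = 0 := by
  have hgper : Function.Periodic (fun x => ∫ y in (0:ℝ)..(2 * π), c x y) (2 * π) := fun x =>
    intervalIntegral.integral_congr fun y _ => (hcp x y).1
  obtain ⟨m, hm, hmg⟩ := hgper.exists_pos_le_norm (by positivity)
    (intervalIntegral.continuous_parametric_intervalIntegral_of_continuous' hc.continuous _ _) hint
  refine ⟨m / (4 * π), by positivity, fun a ha _ haε f hf hfp hode x => ?_⟩
  have hcx : Continuous (c x) := hc.continuous.comp (.prodMk_right x)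
  have hax : Continuous (pderivX a x) :=
    (continuous_pderivX (ha.of_le (by norm_cast))).comp (.prodMk_right x)
  have hb : Continuous fun t => c x t - pderivX a x t := hcx.sub hax
  refine eq_zero_of_hasDerivAt_add_mul_of_integral_ne_zero hb
    (hasDerivAt_pderivY (hf.differentiable (by simp)) x) (hode x) (by simpa using (hfp x 0).2) ?_
  rw [intervalIntegral.integral_sub (hcx.intervalIntegrable _ _) (hax.intervalIntegrable _ _),
    sub_ne_zero]
  intro hcancel
  have hsmall := intervalIntegral.norm_integral_le_of_norm_le_const
    (a := 0) (b := 2 * π) fun t _ => (Real.norm_eq_abs _).trans_le (haε x t).le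
  rw [← hcancel, sub_zero, abs_of_pos (by positivity)] at hsmall
  have hhalf : m / (4 * π) * (2 * π) = m / 2 := by field_simp; ring
  linarith [hmg x]
end

section
/- Let S be the set of pairs (g, f) of smooth 2π-biperiodic functions ℝ² → ℝ satisfying ∂f/∂y − f = f·∂g/∂x everywhere on ℝ², regarded as a subspace of C(ℝ², ℝ) × C(ℝ², ℝ), where C(ℝ², ℝ) carries the compact-open topology. Then S is contractible: there is a continuous map H : S × [0,1] → S with H(·, 0) the identity of S and H(·, 1) the constant map with value (0, 0). -/
open Real

/-- The set of pairs `(g, f)` of smooth 2π-biperiodic functions satisfying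
`∂f/∂y − f = f·∂g/∂x` everywhere, regarded inside `C(ℝ², ℝ) × C(ℝ², ℝ)` with the
compact-open topology. -/
def solutionSet : Set (C(ℝ × ℝ, ℝ) × C(ℝ × ℝ, ℝ)) :=
  {p | Smooth2 (fun x y => p.1 (x, y)) ∧ Biperiodic (fun x y => p.1 (x, y)) ∧
       Smooth2 (fun x y => p.2 (x, y)) ∧ Biperiodic (fun x y => p.2 (x, y)) ∧
       ∀ x y : ℝ, pderivY (fun x y => p.2 (x, y)) x y - p.2 (x, y) =
         p.2 (x, y) * pderivX (fun x y => p.1 (x, y)) x y}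

/-!
The equation `∂f/∂y − f = f·∂g/∂x` is linear in `f` for fixed `g`, and imposes nothing on `g`
once `f = 0`. So the solution set is stable under `(g, f) ↦ (g, a f)` and under
`(g, 0) ↦ (b g, 0)`: the contraction first shrinks `f` to `0`, then `g` to `0`.
-/

section Scaling

variable {u : ℝ → ℝ → ℝ}

lemma Smooth2.const_mul (h : Smooth2 u) (c : ℝ) : Smooth2 fun x y => c * u x y :=
  contDiff_const.mul h

lemma Biperiodic.const_mul (h : Biperiodic u) (c : ℝ) : Biperiodic fun x y => c * u x y :=
  fun x y => ⟨congrArg (c * ·) (h x y).1, congrArg (c * ·) (h x y).2⟩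

lemma pderivX_const_mul (c : ℝ) :
    pderivX (fun x y => c * u x y) = fun x y => c * pderivX u x y :=
  funext₂ fun _ _ => deriv_const_mul_field c

lemma pderivY_const_mul (c : ℝ) :
    pderivY (fun x y => c * u x y) = fun x y => c * pderivY u x y :=
  funext₂ fun _ _ => deriv_const_mul_field c

end Scaling

lemma smul_mem_solutionSet {g f : C(ℝ × ℝ, ℝ)} (hgf : (g, f) ∈ solutionSet) {a b : ℝ}
    (hab : a = 0 ∨ b = 1) : (b • g, a • f) ∈ solutionSet := by
  obtain ⟨hg, hg_per, hf, hf_per, hpde⟩ := hgf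
  simp only [solutionSet, Set.mem_ofPred_eq, ContinuousMap.smul_apply, smul_eq_mul,
    pderivX_const_mul, pderivY_const_mul]
  refine ⟨hg.const_mul b, hg_per.const_mul b, hf.const_mul a, hf_per.const_mul a,
    fun x y => ?_⟩
  rcases hab with rfl | rfl
  · simp
  · linear_combination a * hpde x y

noncomputable def contractionScale (t : ℝ) : ℝ × ℝ :=
  (min 1 (2 - 2 * t), max 0 (1 - 2 * t))

lemma continuous_contractionScale : Continuous contractionScale := by
  unfold contractionScale
  fun_prop

lemma contractionScale_snd_eq_zero_or_fst_eq_one (t : ℝ) :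
    (contractionScale t).2 = 0 ∨ (contractionScale t).1 = 1 := by
  unfold contractionScale
  rcases le_total (1 - 2 * t) 0 with ht | ht
  · exact .inl (max_eq_left ht)
  · exact .inr (min_eq_left (by linarith))

/-- The solution set `S` is contractible: there is a continuous `H : S × [0,1] → S` with
`H(·,0) = id_S` and `H(·,1)` the constant map with value `(0, 0)`. -/
theorem solutionSet_contractible :
    ∃ H : solutionSet × unitInterval → solutionSet,
      Continuous H ∧
      (∀ s : solutionSet, H (s, 0) = s) ∧
      (∀ s : solutionSet, (H (s, 1)).val = ((0 : C(ℝ × ℝ, ℝ)), (0 : C(ℝ × ℝ, ℝ)))) := by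
  refine ⟨fun q => ⟨((contractionScale q.2).1 • q.1.val.1, (contractionScale q.2).2 • q.1.val.2),
      smul_mem_solutionSet q.1.2 (contractionScale_snd_eq_zero_or_fst_eq_one q.2)⟩,
    ?_, fun s => ?_, fun s => ?_⟩
  · have hscale : Continuous fun q : solutionSet × unitInterval => contractionScale q.2 :=
      continuous_contractionScale.comp (continuous_subtype_val.comp continuous_snd)
    have hs : Continuous fun q : solutionSet × unitInterval => q.1.val :=
      continuous_subtype_val.comp continuous_fst
    exact ((hscale.fst.smul hs.fst).prodMk (hscale.snd.smul hs.snd)).subtype_mk _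
  · ext <;> norm_num [contractionScale]
  · norm_num [contractionScale]
end

section
/- Let λ be an irrational real number, and let c, a : ℝ² → ℝ be smooth 2π-biperiodic functions with ∫₀^{2π}∫₀^{2π} c(x,y) dx dy ≠ 0. Then every smooth 2π-biperiodic function f : ℝ² → ℝ satisfying λ·∂f/∂x(x,y) + ∂f/∂y(x,y) + f(x,y)·(c(x,y) − ∂a/∂x(x,y)) = 0 for all (x,y) ∈ ℝ² is identically zero. -/
open Real

/-! Along a characteristic `t ↦ (x₀ + λt, y₀ + t)` the equation becomes the linear ODE
`g' = (∂ₓa - c) g`, so `f` vanishes either on a whole characteristic or nowhere on it. As `λ` is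
irrational, every characteristic is dense modulo `2πℤ²`, so by periodicity and continuity a
single zero of `f` forces `f ≡ 0`. If `f` has no zero, dividing the equation by `f` exhibits
`c = ∂ₓ(a - λ log|f|) + ∂_y(-log|f|)` as a divergence of biperiodic functions, whose integral
over the period square vanishes (Mathlib's `Real.log` is already `log |·|`). -/

open MeasureTheory Function

section PartialDerivatives

variable {u : ℝ → ℝ → ℝ} {x y : ℝ}

theorem Smooth2.contDiff_one (hu : Smooth2 u) : ContDiff ℝ 1 (uncurry u) :=
  ContDiff.of_le hu (by exact_mod_cast le_top)

theorem hasDerivAt_pderivX (hu : DifferentiableAt ℝ (uncurry u) (x, y)) :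
    HasDerivAt (fun t => u t y) (pderivX u x y) x :=
  DifferentiableAt.hasDerivAt (f := uncurry u ∘ fun t => (t, y))
    (hu.comp x (differentiableAt_id.prodMk (differentiableAt_const y)))

theorem hasDerivAt_pderivY_s15 (hu : DifferentiableAt ℝ (uncurry u) (x, y)) :
    HasDerivAt (fun t => u x t) (pderivY u x y) y :=
  DifferentiableAt.hasDerivAt (f := uncurry u ∘ fun t => (x, t))
    (hu.comp y ((differentiableAt_const x).prodMk differentiableAt_id))

theorem pderivX_eq_fderiv (hu : DifferentiableAt ℝ (uncurry u) (x, y)) :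
    pderivX u x y = fderiv ℝ (uncurry u) (x, y) (1, 0) :=
  (hasDerivAt_pderivX hu).unique <| hu.hasFDerivAt.comp_hasDerivAt (f := fun t => (t, y)) x
    ((hasDerivAt_id x).prodMk (hasDerivAt_const x y))

theorem pderivY_eq_fderiv (hu : DifferentiableAt ℝ (uncurry u) (x, y)) :
    pderivY u x y = fderiv ℝ (uncurry u) (x, y) (0, 1) :=
  (hasDerivAt_pderivY_s15 hu).unique <| hu.hasFDerivAt.comp_hasDerivAt (f := fun t => (x, t)) y
    ((hasDerivAt_const y x).prodMk (hasDerivAt_id y))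

theorem continuous_pderivX_s15 (hu : ContDiff ℝ 1 (uncurry u)) :
    Continuous (uncurry (pderivX u)) := by
  have hd := hu.differentiable one_ne_zero
  rw [show uncurry (pderivX u) = fun p => fderiv ℝ (uncurry u) p (1, 0) from
    funext fun p => pderivX_eq_fderiv (hd p)]
  exact (hu.continuous_fderiv one_ne_zero).clm_apply continuous_const

theorem continuous_pderivY (hu : ContDiff ℝ 1 (uncurry u)) :
    Continuous (uncurry (pderivY u)) := by
  have hd := hu.differentiable one_ne_zero
  rw [show uncurry (pderivY u) = fun p => fderiv ℝ (uncurry u) p (0, 1) from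
    funext fun p => pderivY_eq_fderiv (hd p)]
  exact (hu.continuous_fderiv one_ne_zero).clm_apply continuous_const

theorem hasDerivAt_comp_line (hu : Differentiable ℝ (uncurry u)) (l x₀ y₀ t : ℝ) :
    HasDerivAt (fun s => u (x₀ + l * s) (y₀ + s))
      (l * pderivX u (x₀ + l * t) (y₀ + t) + pderivY u (x₀ + l * t) (y₀ + t)) t := by
  have hline : HasDerivAt (fun s => (x₀ + l * s, y₀ + s)) (l, 1) t := by
    simpa using (((hasDerivAt_id t).const_mul l).const_add x₀).prodMk
      ((hasDerivAt_id t).const_add y₀)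
  refine ((hu _).hasFDerivAt.comp_hasDerivAt (f := fun s => (x₀ + l * s, y₀ + s)) t
    hline).congr_deriv ?_
  rw [pderivX_eq_fderiv (hu _), pderivY_eq_fderiv (hu _),
    show ((l, 1) : ℝ × ℝ) = l • (1, 0) + (0, 1) by simp, map_add, map_smul, smul_eq_mul]

end PartialDerivatives

theorem eq_zero_of_hasDerivAt_mul_self {g k : ℝ → ℝ} (hk : Continuous k)
    (hg : ∀ t, HasDerivAt g (k t * g t) t) (h₀ : g 0 = 0) (t : ℝ) : g t = 0 := by
  set E : ℝ → ℝ := fun t => g t * exp (-∫ s in (0 : ℝ)..t, k s)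
  have hE : ∀ t, HasDerivAt E 0 t := fun t =>
    ((hg t).mul (hk.integral_hasStrictDerivAt 0 t).hasDerivAt.neg.exp).congr_deriv (by ring)
  have hconst := is_const_of_deriv_eq_zero (fun t => (hE t).differentiableAt)
    (fun t => (hE t).deriv) t 0
  simpa [E, h₀] using hconst

theorem eq_zero_along_characteristic {f q : ℝ → ℝ → ℝ} {l : ℝ}
    (hf : Differentiable ℝ (uncurry f)) (hq : Continuous (uncurry q))
    (heq : ∀ x y, l * pderivX f x y + pderivY f x y = q x y * f x y)
    {x₀ y₀ : ℝ} (h₀ : f x₀ y₀ = 0) (t : ℝ) : f (x₀ + l * t) (y₀ + t) = 0 := by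
  have hline : Continuous fun s => (x₀ + l * s, y₀ + s) := by fun_prop
  refine eq_zero_of_hasDerivAt_mul_self (g := fun s => f (x₀ + l * s) (y₀ + s))
    (k := fun s => q (x₀ + l * s) (y₀ + s)) (hq.comp hline) (fun s => ?_)
    (by simpa using h₀) t
  simpa only [heq] using hasDerivAt_comp_line hf l x₀ y₀ s

theorem eq_zero_of_biperiodic_of_eq_zero_on_line {F : ℝ → ℝ → ℝ} {l : ℝ}
    (hl : Irrational l) (hF : ∀ y, Continuous fun x => F x y) (hFp : Biperiodic F) {x₀ y₀ : ℝ}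
    (hline : ∀ t, F (x₀ + l * t) (y₀ + t) = 0) (x y : ℝ) : F x y = 0 := by
  set b := x₀ + l * (y - y₀)
  have hdense : Dense (AddSubgroup.closure {2 * π * l, 2 * π} : Set ℝ) :=
    dense_addSubgroupClosure_pair_iff.2 (by rwa [mul_div_cancel_left₀ _ two_pi_pos.ne'])
  -- `(b + n • 2πλ, y + n • 2π)` lies on the line, so periodicity transports its zero.
  have hzero : ∀ s ∈ AddSubgroup.closure {2 * π * l, 2 * π}, F (b + s) y = 0 := by
    intro s hs
    obtain ⟨n, m, rfl⟩ := AddSubgroup.mem_closure_pair.1 hs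
    have hx : Periodic (fun x => F x y) (2 * π) := fun x => (hFp x y).1
    have hy : Periodic (F (b + n • (2 * π * l))) (2 * π) := fun y => (hFp _ y).2
    calc F (b + (n • (2 * π * l) + m • (2 * π))) y
        = F (b + n • (2 * π * l)) (y + n • (2 * π)) := by
          rw [← add_assoc]
          exact (hx.zsmul m _).trans (hy.zsmul n _).symm
      _ = F (x₀ + l * (y - y₀ + n * (2 * π))) (y₀ + (y - y₀ + n * (2 * π))) := by
          congr 1 <;> simp only [b, zsmul_eq_mul] <;> ring
      _ = 0 := hline _
  have hext := Continuous.ext_on hdense ((hF y).comp (continuous_const_add b)) continuous_const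
    hzero
  simpa [b] using congrFun hext (x - b)

theorem coeff_eq_divergence_of_ne_zero {a c f : ℝ → ℝ → ℝ} {l x y : ℝ}
    (ha : DifferentiableAt ℝ (uncurry a) (x, y)) (hf : DifferentiableAt ℝ (uncurry f) (x, y))
    (hne : f x y ≠ 0)
    (heq : l * pderivX f x y + pderivY f x y + f x y * (c x y - pderivX a x y) = 0) :
    c x y = pderivX (fun x y => a x y - l * log (f x y)) x y
      + pderivY (fun x y => -log (f x y)) x y := by
  have hX : pderivX (fun x y => a x y - l * log (f x y)) x y
      = pderivX a x y - l * (pderivX f x y / f x y) :=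
    ((hasDerivAt_pderivX ha).fun_sub (((hasDerivAt_pderivX hf).log hne).const_mul l)).deriv
  have hY : pderivY (fun x y => -log (f x y)) x y = -(pderivY f x y / f x y) :=
    ((hasDerivAt_pderivY_s15 hf).log hne).fun_neg.deriv
  rw [hX, hY]
  field_simp
  linear_combination heq

theorem Function.Periodic.intervalIntegral_deriv_eq_zero {g : ℝ → ℝ} {T : ℝ}
    (hp : Periodic g T) (hg : Differentiable ℝ g) (hint : IntervalIntegrable (deriv g) volume 0 T) :
    ∫ x in (0 : ℝ)..T, deriv g x = 0 := by
  rw [intervalIntegral.integral_deriv_eq_sub (fun x _ => hg x) hint, ← zero_add T, hp 0,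
    sub_self]

theorem intervalIntegral_intervalIntegral_swap_of_continuous {F : ℝ → ℝ → ℝ}
    (hF : Continuous (uncurry F)) (a b c d : ℝ) :
    ∫ x in a..b, ∫ y in c..d, F x y = ∫ y in c..d, ∫ x in a..b, F x y :=
  intervalIntegral_intervalIntegral_swap <|
    (hF.continuousOn.integrableOn_compact (isCompact_uIcc.prod isCompact_uIcc)).mono_set
      (Set.prod_mono Set.uIoc_subset_uIcc Set.uIoc_subset_uIcc)

section PeriodSquare

variable {u v : ℝ → ℝ → ℝ} {T : ℝ}

theorem integral_pderivX_eq_zero (hu : ContDiff ℝ 1 (uncurry u))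
    (hper : ∀ x y, u (x + T) y = u x y) (y : ℝ) : ∫ x in (0 : ℝ)..T, pderivX u x y = 0 :=
  Periodic.intervalIntegral_deriv_eq_zero (g := fun t => u t y) (fun x => hper x y)
    (fun x => (hasDerivAt_pderivX (hu.differentiable one_ne_zero (x, y))).differentiableAt)
    (((continuous_pderivX_s15 hu).uncurry_right y).intervalIntegrable _ _)

theorem integral_pderivY_eq_zero (hu : ContDiff ℝ 1 (uncurry u))
    (hper : ∀ x y, u x (y + T) = u x y) (x : ℝ) : ∫ y in (0 : ℝ)..T, pderivY u x y = 0 :=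
  Periodic.intervalIntegral_deriv_eq_zero (g := fun t => u x t) (hper x)
    (fun y => (hasDerivAt_pderivY_s15 (hu.differentiable one_ne_zero (x, y))).differentiableAt)
    (((continuous_pderivY hu).uncurry_left x).intervalIntegrable _ _)

theorem integral_integral_divergence_eq_zero (hu : ContDiff ℝ 1 (uncurry u))
    (hup : ∀ x y, u (x + T) y = u x y) (hv : ContDiff ℝ 1 (uncurry v))
    (hvp : ∀ x y, v x (y + T) = v x y) :
    ∫ y in (0 : ℝ)..T, ∫ x in (0 : ℝ)..T, (pderivX u x y + pderivY v x y) = 0 := by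
  have hinner : ∀ y, ∫ x in (0 : ℝ)..T, (pderivX u x y + pderivY v x y)
      = ∫ x in (0 : ℝ)..T, pderivY v x y := fun y => by
    rw [intervalIntegral.integral_add
      (((continuous_pderivX_s15 hu).uncurry_right y).intervalIntegrable _ _)
      (((continuous_pderivY hv).uncurry_right y).intervalIntegrable _ _),
      integral_pderivX_eq_zero hu hup, zero_add]
  simp_rw [hinner]
  rw [intervalIntegral_intervalIntegral_swap_of_continuous (F := fun y x => pderivY v x y)
    ((continuous_pderivY hv).comp continuous_swap)]
  simp [integral_pderivY_eq_zero hv hvp]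

end PeriodSquare

theorem nonzero_integral_only_zero_solution_general (l : ℝ) (hl : Irrational l)
    (c a : ℝ → ℝ → ℝ) (hc : Smooth2 c)
    (ha : Smooth2 a) (hap : Biperiodic a)
    (hint : (∫ y in (0:ℝ)..(2 * π), ∫ x in (0:ℝ)..(2 * π), c x y) ≠ 0)
    (f : ℝ → ℝ → ℝ) (hf : Smooth2 f) (hfp : Biperiodic f)
    (heq : ∀ x y, l * pderivX f x y + pderivY f x y + f x y * (c x y - pderivX a x y) = 0) :
    ∀ x y, f x y = 0 := by
  have ha₁ := ha.contDiff_one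
  have hf₁ := hf.contDiff_one
  by_cases hzero : ∃ x₀ y₀, f x₀ y₀ = 0
  · obtain ⟨x₀, y₀, h₀⟩ := hzero
    have hchar := eq_zero_along_characteristic (q := fun x y => pderivX a x y - c x y)
      (hf₁.differentiable one_ne_zero) ((continuous_pderivX_s15 ha₁).sub hc.continuous)
      (fun x y => by linear_combination heq x y) h₀
    exact eq_zero_of_biperiodic_of_eq_zero_on_line hl (hf.continuous.uncurry_right ·) hfp hchar
  · push Not at hzero
    have hlog : ContDiff ℝ 1 (uncurry fun x y => log (f x y)) := hf₁.log fun p => hzero p.1 p.2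
    have hdiv x y := coeff_eq_divergence_of_ne_zero (ha₁.differentiable one_ne_zero (x, y))
      (hf₁.differentiable one_ne_zero (x, y)) (hzero x y) (heq x y)
    refine absurd ?_ hint
    simp_rw [hdiv]
    exact integral_integral_divergence_eq_zero (ha₁.sub (contDiff_const.mul hlog))
      (fun x y => by simp [(hap x y).1, (hfp x y).1]) hlog.neg (fun x y => by simp [(hfp x y).2])

/-- For irrational `λ` and smooth 2π-biperiodic `c, a` with
`∫₀^{2π}∫₀^{2π} c(x,y) dx dy ≠ 0`, every smooth 2π-biperiodic solution `f` of
`λ·∂f/∂x + ∂f/∂y + f·(c − ∂a/∂x) = 0` is identically zero. -/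
theorem nonzero_integral_only_zero_solution (l : ℝ) (hl : Irrational l)
    (c a : ℝ → ℝ → ℝ) (hc : Smooth2 c) (hcp : Biperiodic c)
    (ha : Smooth2 a) (hap : Biperiodic a)
    (hint : (∫ y in (0:ℝ)..(2 * π), ∫ x in (0:ℝ)..(2 * π), c x y) ≠ 0)
    (f : ℝ → ℝ → ℝ) (hf : Smooth2 f) (hfp : Biperiodic f)
    (heq : ∀ x y, l * pderivX f x y + pderivY f x y + f x y * (c x y - pderivX a x y) = 0) :
    ∀ x y, f x y = 0 :=
  nonzero_integral_only_zero_solution_general l hl c a hc ha hap hint f hf hfp heq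
end
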